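/- arXiv:2406.06428 — 3 statements merged into one kernel-verified Lean document; each statement's English description precedes it below -/
import Mathlib

section
/- Let p and q be distinct primes. A finite group G has a p-nilpotent Hall {p,q}-subgroup if and only if there exist a Sylow p-subgroup P and a Sylow q-subgroup Q of G such that P normalizes Q. -/
/-- `H` is a Hall `π`-subgroup: its order is a `π`-number and its index is a `π'`-number. -/
def IsHallSubgroup {G : Type*} [Group G] (π : Set ℕ) (H : Subgroup G) : Prop :=
  (∀ r : ℕ, r.Prime → r ∣ Nat.card H → r ∈ π) ∧
  (∀ r : ℕ, r.Prime → r ∣ H.index → r ∉ π)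

/-- A group is `p`-nilpotent if it has a normal `p`-complement. -/
def IsPNilpotent (p : ℕ) (G : Type*) [Group G] : Prop :=
  ∃ K : Subgroup G, K.Normal ∧ Nat.Coprime (Nat.card K) p ∧ ∃ n : ℕ, K.index = p ^ n

/-!
If `H` is a Hall `{p, q}`-subgroup with normal `p`-complement `K`, then `K` is a `q`-group whose
index in `G` is prime to `q`, so `K` is a Sylow `q`-subgroup of `G`; it is normalized by `H`, hence
by a Sylow `p`-subgroup of `H`, which is Sylow in `G` as well. Conversely, if `P` normalizes `Q`
then `Q` is normal in `P ⊔ Q = PQ`, whose order `|Q| [P : P ∩ Q]` is a `{p, q}`-number; `P ⊔ Q`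
contains Sylow subgroups for both primes, and `Q` is a normal complement of index a power of `p`.
-/

open Subgroup

namespace Subgroup

variable {G : Type*} [Group G]

theorem le_normalizer_map_subtype {H : Subgroup G} {K : Subgroup H} (hK : K.Normal) :
    H ≤ normalizer ((K.map H.subtype : Subgroup G) : Set G) := by
  rwa [← normal_subgroupOf_iff_le_normalizer (map_subtype_le K), subgroupOf,
    comap_map_eq_self_of_injective H.subtype_injective]

theorem relIndex_sup_right_of_le_normalizer {H K : Subgroup G}
    (h : H ≤ normalizer (K : Set G)) : K.relIndex (H ⊔ K) = K.relIndex H := by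
  have hK : K ≤ normalizer (K : Set G) := le_normalizer
  rw [← relIndex_subgroupOf (sup_le h hK), subgroupOf_sup h hK, relIndex_sup_right,
    relIndex_subgroupOf h]

theorem card_sup_of_le_normalizer {H K : Subgroup G} (h : H ≤ normalizer (K : Set G)) :
    Nat.card ↥(H ⊔ K) = Nat.card K * K.relIndex H := by
  rw [← relIndex_sup_right_of_le_normalizer h, ← relIndex_bot_left, ← relIndex_bot_left]
  exact (relIndex_mul_relIndex _ _ _ bot_le le_sup_right).symm

end Subgroup

section Sylow

variable {G : Type*} [Group G] {p : ℕ} [Fact p.Prime]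

theorem Sylow.not_dvd_index_of_le [Finite G] (P : Sylow p G) {H : Subgroup G} (h : ↑P ≤ H) :
    ¬ p ∣ H.index :=
  fun hdvd ↦ P.not_dvd_index (hdvd.trans (index_dvd_of_le h))

theorem exists_sylow_eq_map_subtype {H : Subgroup G} (hH : ¬ p ∣ H.index) {K : Subgroup H}
    (hK : IsPGroup p K) (hKH : ¬ p ∣ K.index) :
    ∃ P : Sylow p G, (P : Subgroup G) = K.map H.subtype :=
  ⟨(hK.map H.subtype).toSylow
    (by rw [index_map_subtype]; exact (Fact.out : p.Prime).not_dvd_mul hKH hH), rfl⟩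

theorem IsPGroup.exists_relIndex_eq_pow {P : Subgroup G} [Finite P] (hP : IsPGroup p P)
    (K : Subgroup G) : ∃ n : ℕ, K.relIndex P = p ^ n :=
  hP.index (K.subgroupOf P)

end Sylow

namespace IsHallSubgroup

variable {G : Type*} [Group G]

theorem not_dvd_index {π : Set ℕ} {H : Subgroup G} (hH : IsHallSubgroup π H) {r : ℕ}
    (hr : r.Prime) (hrπ : r ∈ π) : ¬ r ∣ H.index :=
  fun hdvd ↦ hH.2 r hr hdvd hrπ

theorem isPGroup_of_coprime_card [Finite G] {p q : ℕ} {H : Subgroup G}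
    (hH : IsHallSubgroup {p, q} H) (hq : q.Prime) {K : Subgroup H}
    (hK : (Nat.card K).Coprime p) : IsPGroup q K := by
  rw [isPGroup_iff_primeFactors_card_subset hq.ne_zero, hq.primeFactors]
  intro r hr
  have hr' := Nat.prime_of_mem_primeFactors hr
  have hrK := Nat.dvd_of_mem_primeFactors hr
  rcases hH.1 r hr' (hrK.trans K.card_subgroup_dvd_card) with rfl | rfl
  · exact absurd ((Nat.coprime_self r).mp (hK.coprime_dvd_left hrK)) hr'.ne_one
  · exact Finset.mem_singleton_self r

end IsHallSubgroup

theorem isHallSubgroup_sup_sylow {G : Type*} [Group G] [Finite G] {p q : ℕ} [Fact p.Prime]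
    [Fact q.Prime] (P : Sylow p G) (Q : Sylow q G)
    (hPQ : (P : Subgroup G) ≤ normalizer ((Q : Subgroup G) : Set G)) :
    IsHallSubgroup {p, q} (P ⊔ Q : Subgroup G) := by
  refine ⟨fun r hr hrd ↦ ?_, ?_⟩
  · obtain ⟨n, hn⟩ := P.2.exists_relIndex_eq_pow Q
    rw [card_sup_of_le_normalizer hPQ, Q.card_eq_multiplicity, hn] at hrd
    rcases hr.dvd_mul.mp hrd with h | h
    · exact Or.inr ((Nat.prime_dvd_prime_iff_eq hr Fact.out).mp (hr.dvd_of_dvd_pow h))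
    · exact Or.inl ((Nat.prime_dvd_prime_iff_eq hr Fact.out).mp (hr.dvd_of_dvd_pow h))
  · rintro r - hrd (rfl | rfl)
    exacts [P.not_dvd_index_of_le le_sup_left hrd, Q.not_dvd_index_of_le le_sup_right hrd]

theorem isPNilpotent_sup_sylow {G : Type*} [Group G] [Finite G] {p q : ℕ} [Fact p.Prime]
    [Fact q.Prime] (hpq : p ≠ q) (P : Sylow p G) (Q : Sylow q G)
    (hPQ : (P : Subgroup G) ≤ normalizer ((Q : Subgroup G) : Set G)) :
    IsPNilpotent p ↥(P ⊔ Q : Subgroup G) := by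
  obtain ⟨n, hn⟩ := P.2.exists_relIndex_eq_pow Q
  refine ⟨(Q : Subgroup G).subgroupOf (P ⊔ Q), normal_subgroupOf_sup_of_le_normalizer hPQ,
    ?_, n, ?_⟩
  · rw [Nat.card_congr (subgroupOfEquivOfLe le_sup_right).toEquiv, Q.card_eq_multiplicity]
    exact ((Nat.coprime_primes Fact.out Fact.out).mpr hpq.symm).pow_left _
  · rw [← relIndex, relIndex_sup_right_of_le_normalizer hPQ, hn]

theorem IsHallSubgroup.exists_sylow_le_normalizer {G : Type*} [Group G] [Finite G] {p q : ℕ}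
    [Fact p.Prime] [Fact q.Prime] (hpq : p ≠ q) {H : Subgroup G}
    (hH : IsHallSubgroup {p, q} H) (hN : IsPNilpotent p H) :
    ∃ (P : Sylow p G) (Q : Sylow q G),
      (P : Subgroup G) ≤ normalizer ((Q : Subgroup G) : Set G) := by
  obtain ⟨K, hKn, hKp, n, hKi⟩ := hN
  have hqK : ¬ q ∣ K.index := by
    rw [hKi, ← (Fact.out : q.Prime).coprime_iff_not_dvd]
    exact ((Nat.coprime_primes Fact.out Fact.out).mpr hpq.symm).pow_right n
  obtain ⟨P₀⟩ : Nonempty (Sylow p H) := inferInstance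
  obtain ⟨P, hP⟩ := exists_sylow_eq_map_subtype (hH.not_dvd_index Fact.out (by simp)) P₀.2
    P₀.not_dvd_index
  obtain ⟨Q, hQ⟩ := exists_sylow_eq_map_subtype (hH.not_dvd_index Fact.out (by simp))
    (hH.isPGroup_of_coprime_card Fact.out hKp) hqK
  exact ⟨P, Q, hP ▸ hQ ▸ (map_subtype_le _).trans (le_normalizer_map_subtype hKn)⟩

theorem stmt2 {G : Type*} [Group G] [Finite G] (p q : ℕ) [Fact p.Prime] [Fact q.Prime]
    (hpq : p ≠ q) :
    (∃ H : Subgroup G, IsHallSubgroup {p, q} H ∧ IsPNilpotent p ↥H) ↔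
      ∃ (P : Sylow p G) (Q : Sylow q G),
        (P : Subgroup G) ≤ Subgroup.normalizer ((Q : Subgroup G) : Set G) :=
  ⟨fun ⟨_, hH, hN⟩ ↦ hH.exists_sylow_le_normalizer hpq hN,
    fun ⟨P, Q, hPQ⟩ ↦
      ⟨P ⊔ Q, isHallSubgroup_sup_sylow P Q hPQ, isPNilpotent_sup_sylow hpq P Q hPQ⟩⟩
end

section
/- Let G be a finite group with a normal p'-subgroup K, and let p, q be distinct primes. If G/K has a Sylow p-subgroup that normalizes a Sylow q-subgroup of G/K, then G has a Sylow p-subgroup that normalizes a Sylow q-subgroup of G. -/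
/-!
Lift the Sylow `q`-subgroup `Q'` of `G/K` to a Sylow `q`-subgroup `Q` of `G` and let `M` be the
preimage of `Q'`, a `p'`-group since `|M| = |K| |Q'|`. By the Frattini argument inside
`N_G(M)`, `[N_G(M) : N_G(Q)]` divides `|M|`, while `[G : N_G(M)] = [G/K : N(Q')]` divides
`[G/K : P']`. Hence `p ∤ [G : N_G(Q)]`, so a Sylow `p`-subgroup of `N_G(Q)` is one of `G`.
-/

open Subgroup

theorem Subgroup.index_dvd_card_of_sup_eq_top {G : Type*} [Group G] [Finite G]
    {H K : Subgroup G} [K.Normal] (h : H ⊔ K = ⊤) : H.index ∣ Nat.card K := by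
  have key : H.relIndex K * K.index = H.index * K.index :=
    calc H.relIndex K * K.index = (H ⊓ K).index := by
          simpa only [inf_top_eq, relIndex_top_right] using relIndex_inf_mul_relIndex H K ⊤
      _ = K.relIndex H * H.index := by rw [← relIndex_mul_index inf_le_left, inf_relIndex_left]
      _ = H.index * K.index := by rw [← relIndex_sup_right, h, relIndex_top_right, mul_comm]
  rw [← Nat.eq_of_mul_eq_mul_right (Nat.pos_of_ne_zero index_ne_zero_of_finite) key]
  exact relIndex_dvd_card H K

theorem Sylow.relIndex_normalizer_dvd_card {G : Type*} [Group G] [Finite G] {p : ℕ}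
    [Fact p.Prime] (Q : Sylow p G) {M : Subgroup G} (hQM : (Q : Subgroup G) ≤ M) :
    (normalizer (Q : Set G)).relIndex (normalizer (M : Set G)) ∣ Nat.card M := by
  set N := normalizer (M : Set G)
  have hQN : (Q : Subgroup G) ≤ N := hQM.trans le_normalizer
  have : (M.subgroupOf N).Normal := normal_in_normalizer
  have frattini := Sylow.normalizer_sup_eq_top' (N := M.subgroupOf N) (Q.subtype hQN)
    (by rw [Q.coe_subtype]; exact subgroupOf_mono N hQM)
  rw [← Sylow.coe_coe, Q.coe_subtype, ← subgroupOf_normalizer_eq hQN] at frattini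
  rw [← Nat.card_congr (subgroupOfEquivOfLe le_normalizer).toEquiv]
  exact index_dvd_card_of_sup_eq_top frattini

theorem Sylow.exists_le_of_not_dvd_index {G : Type*} [Group G] [Finite G] {p : ℕ}
    [Fact p.Prime] {H : Subgroup G} (hH : ¬ p ∣ H.index) :
    ∃ P : Sylow p G, (P : Subgroup G) ≤ H := by
  obtain ⟨P₀⟩ : Nonempty (Sylow p H) := inferInstance
  have hP : ¬ p ∣ (P₀.map H.subtype).index := by
    rw [index_map_subtype]
    exact Nat.Prime.not_dvd_mul Fact.out P₀.not_dvd_index hH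
  exact ⟨(P₀.2.map H.subtype).toSylow hP, map_subtype_le _⟩

theorem QuotientGroup.card_comap_mk' {G : Type*} [Group G] (K : Subgroup G) [K.Normal]
    (H : Subgroup (G ⧸ K)) :
    Nat.card (H.comap (QuotientGroup.mk' K)) = Nat.card K * Nat.card H :=
  QuotientGroup.card_preimage_mk K H

theorem stmt4 {G : Type*} [Group G] [Finite G] (p q : ℕ) [Fact p.Prime] [Fact q.Prime]
    (hpq : p ≠ q) (K : Subgroup G) [K.Normal] (hK : Nat.Coprime (Nat.card K) p)
    (h : ∃ (P' : Sylow p (G ⧸ K)) (Q' : Sylow q (G ⧸ K)),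
      (P' : Subgroup (G ⧸ K)) ≤ Subgroup.normalizer ((Q' : Subgroup (G ⧸ K)) : Set (G ⧸ K))) :
    ∃ (P : Sylow p G) (Q : Sylow q G),
      (P : Subgroup G) ≤ Subgroup.normalizer ((Q : Subgroup G) : Set G) := by
  obtain ⟨P', Q', hPQ'⟩ := h
  have hπ := QuotientGroup.mk'_surjective K
  obtain ⟨Q, hQ⟩ := Sylow.mapSurjective_surjective hπ q Q'
  have hQ' : (Q : Subgroup G).map (QuotientGroup.mk' K) = Q' := by
    rw [← Sylow.coe_mapSurjective hπ, hQ]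
  set M := (Q' : Subgroup (G ⧸ K)).comap (QuotientGroup.mk' K)
  have hM : Nat.Coprime (Nat.card M) p := by
    obtain ⟨n, hn⟩ := Q'.2.exists_card_eq
    rw [QuotientGroup.card_comap_mk', hn]
    exact hK.mul_left (((Nat.coprime_primes Fact.out Fact.out).mpr hpq.symm).pow_left n)
  have hNM : normalizer (M : Set G) =
      (normalizer (Q' : Set (G ⧸ K))).comap (QuotientGroup.mk' K) :=
    (comap_normalizer_eq_of_surjective _ hπ).symm
  have hQN : normalizer (Q : Set G) ≤ normalizer (M : Set G) := by
    rw [hNM, ← map_le_iff_le_comap, ← Sylow.coe_coe, ← Sylow.coe_coe Q', ← hQ']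
    exact le_normalizer_map _
  have hpQ : ¬ p ∣ (normalizer (Q : Set G)).index := by
    rw [← relIndex_mul_index hQN]
    refine Nat.Prime.not_dvd_mul Fact.out (fun hdvd ↦ ?_) (fun hdvd ↦ ?_)
    · exact (Nat.Prime.coprime_iff_not_dvd Fact.out).mp hM.symm
        (hdvd.trans (Q.relIndex_normalizer_dvd_card (map_le_iff_le_comap.mp hQ'.le)))
    · rw [hNM, index_comap_of_surjective _ hπ] at hdvd
      exact P'.not_dvd_index (hdvd.trans (index_dvd_of_le hPQ'))
  obtain ⟨P, hP⟩ := Sylow.exists_le_of_not_dvd_index hpQ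
  exact ⟨P, Q, hP⟩
end

section
/- Let A be a finite group acting on a finite group G, let N be an A-invariant normal subgroup of G with gcd(|A|, |N|) = 1. If A acts trivially on N and on G/N, then A acts trivially on G. -/
theorem stmt7 {A G : Type*} [Group A] [Group G] [Finite A] [Finite G]
    (φ : A →* MulAut G) (N : Subgroup G) (hN : N.Normal)
    (hinv : ∀ a : A, ∀ n ∈ N, φ a n ∈ N)
    (hcop : Nat.Coprime (Nat.card A) (Nat.card N))
    (htrivN : ∀ a : A, ∀ n ∈ N, φ a n = n)
    (htrivQ : ∀ (a : A) (g : G), (φ a g) * g⁻¹ ∈ N) :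
    ∀ (a : A) (g : G), φ a g = g := by
  intro a g
  set x : G := φ a g * g⁻¹ with hx
  have hxN : x ∈ N := htrivQ a g
  have hag : φ a g = x * g := by rw [hx, inv_mul_cancel_right]
  have key : ∀ n : ℕ, φ (a ^ n) g = x ^ n * g := by
    intro n
    induction n with
    | zero => simp
    | succ n ih =>
      have hxnN : x ^ n ∈ N := pow_mem hxN n
      calc φ (a ^ (n + 1)) g = φ a (φ (a ^ n) g) := by
            rw [pow_succ' a n]; simp [MulAut.mul_apply]
        _ = φ a (x ^ n * g) := by rw [ih]
        _ = φ a (x ^ n) * φ a g := by simp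
        _ = x ^ n * (x * g) := by rw [htrivN a _ hxnN, hag]
        _ = x ^ (n + 1) * g := by rw [pow_succ]; group
  have hpow : x ^ Nat.card A = 1 := by
    have := key (Nat.card A)
    rw [pow_card_eq_one'] at this
    simp at this
    have : x ^ Nat.card A * g = g := by
      rw [← key (Nat.card A), pow_card_eq_one']; simp
    exact mul_right_cancel (by rw [this, one_mul])
  have h1 : orderOf x ∣ Nat.card A := orderOf_dvd_of_pow_eq_one hpow
  have h2 : orderOf x ∣ Nat.card N := by
    have : orderOf (⟨x, hxN⟩ : N) ∣ Nat.card N := orderOf_dvd_natCard _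
    rwa [Subgroup.orderOf_mk] at this
  have : orderOf x = 1 := Nat.eq_one_of_dvd_coprimes hcop h1 h2
  have hx1 : x = 1 := orderOf_eq_one_iff.mp this
  rw [hag, hx1, one_mul]
end
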